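/- Let ψ be a t-doped stabilizer state on N qubits, i.e. ψ = C_t T_{i_t} C_{t−1} ⋯ C_1 T_{i_1} C_0 (|0⟩^{⊗N}) with each C_j Clifford and each T_{i_j} a T gate on some qubit, and let ρ = |ψ⟩⟨ψ|. Then the probability that a Pauli string sampled from the distribution Π_ρ belongs to the stabilizer group is at least 2^{−t}: Σ_{σ ∈ G_S(ψ)} Π_ρ(σ) = 2^{k_ψ − N} ≥ 2^{−t}. -/

import Mathlib

open Matrix
open scoped ComplexOrder

/-- The four Pauli matrices. -/
noncomputable def pauli : Fin 4 → Matrix (Fin 2) (Fin 2) ℂ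
  | 0 => 1
  | 1 => !![0, 1; 1, 0]
  | 2 => !![0, -Complex.I; Complex.I, 0]
  | 3 => !![1, 0; 0, -1]

/-- The Pauli string `σ^{α 0} ⊗ ⋯ ⊗ σ^{α (N-1)}` as a `2^N × 2^N` matrix,
indexed by computational-basis labels `Fin N → Fin 2`. -/
noncomputable def pauliString {N : ℕ} (α : Fin N → Fin 4) :
    Matrix (Fin N → Fin 2) (Fin N → Fin 2) ℂ :=
  fun s s' => ∏ j, pauli (α j) (s j) (s' j)

/-- The stabilizer group of `ψ`: the Pauli strings of which `ψ` is a `±1` eigenvector. -/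
def stabGroup {N : ℕ} (ψ : (Fin N → Fin 2) → ℂ) :
    Set (Matrix (Fin N → Fin 2) (Fin N → Fin 2) ℂ) :=
  {σ | (∃ α : Fin N → Fin 4, σ = pauliString α) ∧ (σ *ᵥ ψ = ψ ∨ σ *ᵥ ψ = -ψ)}

/-- A unitary `U` is Clifford if it maps every Pauli string to a Pauli string up to a
phase `c ∈ {1, -1, i, -i}` under conjugation. -/
def IsClifford {N : ℕ} (U : Matrix (Fin N → Fin 2) (Fin N → Fin 2) ℂ) : Prop :=
  U ∈ Matrix.unitaryGroup (Fin N → Fin 2) ℂ ∧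
  ∀ α : Fin N → Fin 4, ∃ (β : Fin N → Fin 4) (c : ℂ),
    (c = 1 ∨ c = -1 ∨ c = Complex.I ∨ c = -Complex.I) ∧
    U * pauliString α * Uᴴ = c • pauliString β

/-- The T gate acting on qubit `i`: `I^{⊗(i-1)} ⊗ diag(1, e^{iπ/4}) ⊗ I^{⊗(N-i)}`. -/
noncomputable def Tgate {N : ℕ} (i : Fin N) :
    Matrix (Fin N → Fin 2) (Fin N → Fin 2) ℂ :=
  Matrix.diagonal fun s => if s i = 1 then Complex.exp (Complex.I * Real.pi / 4) else 1

/-- The state `|0⟩^{⊗N}`. -/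
def zeroState (N : ℕ) : (Fin N → Fin 2) → ℂ :=
  fun s => if s = fun _ => 0 then 1 else 0

/-!
For a unit vector `ψ` every `σ ∈ G_S(ψ)` has `Tr[ρσ] = ⟨ψ|σ|ψ⟩ = ±1`, so the sum equals
`|G_S(ψ)| / 2^N` and it suffices to show `2^N ≤ 2^t |G_S(ψ)|`. The `2^N` strings built from `I` and
`Z` stabilize `|0⟩^{⊗N}`. Conjugation by a Clifford unitary `C` sends the stabilizers of `ψ`
injectively, up to phases, to stabilizers of `Cψ`. A T gate on qubit `i` commutes with the Pauli
strings that are `I` or `Z` on qubit `i`; these form a subgroup of index at most two of `G_S(ψ)`,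
since multiplying by one stabilizer that is `X` or `Y` on qubit `i` maps the others into it. So
each T gate at most halves the stabilizer group.
-/

/-- With the labels `I, X, Y, Z = 0, 1, 2, 3`, Pauli matrices multiply like the labels under
`xor`, up to the phase `pauli a * pauli b = pauliMulPhase a b • pauli (a ^^^ b)`. -/
noncomputable def pauliMulPhase : Fin 4 → Fin 4 → ℂ
  | 1, 2 => Complex.I | 2, 3 => Complex.I | 3, 1 => Complex.I
  | 2, 1 => -Complex.I | 3, 2 => -Complex.I | 1, 3 => -Complex.I
  | _, _ => 1

lemma pauli_mul_pauli (a b : Fin 4) : pauli a * pauli b = pauliMulPhase a b • pauli (a ^^^ b) := by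
  fin_cases a <;> fin_cases b <;> ext i j <;> fin_cases i <;> fin_cases j <;>
    simp [pauli, pauliMulPhase, Matrix.mul_apply, Fin.sum_univ_two]

lemma pauliMulPhase_ne_zero (a b : Fin 4) : pauliMulPhase a b ≠ 0 := by
  fin_cases a <;> fin_cases b <;> simp [pauliMulPhase]

lemma pauli_mul_self (a : Fin 4) : pauli a * pauli a = 1 := by
  fin_cases a <;> ext i j <;> fin_cases i <;> fin_cases j <;>
    simp [pauli, Matrix.mul_apply, Fin.sum_univ_two]

lemma trace_pauli_mul_pauli (a b : Fin 4) :
    trace (pauli a * pauli b) = if a = b then 2 else 0 := by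
  fin_cases a <;> fin_cases b <;>
    simp [pauli, Matrix.trace, Fin.sum_univ_two, one_add_one_eq_two]

lemma pauli_apply_eq_zero_of_ne {a : Fin 4} (ha : a = 0 ∨ a = 3) {x y : Fin 2} (hxy : x ≠ y) :
    pauli a x y = 0 := by
  rcases ha with rfl | rfl <;> fin_cases x <;> fin_cases y <;> simp_all [pauli]

lemma pauli_apply_zero_right {a : Fin 4} (ha : a = 0 ∨ a = 3) (x : Fin 2) :
    pauli a x 0 = if x = 0 then 1 else 0 := by
  rcases ha with rfl | rfl <;> fin_cases x <;> simp [pauli, Matrix.one_apply]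

lemma xor_left_injective_fin_four (a : Fin 4) : Function.Injective (a ^^^ ·) := by
  revert a; decide

variable {N : ℕ}

lemma pauliString_mul_apply (α β : Fin N → Fin 4) (s s' : Fin N → Fin 2) :
    (pauliString α * pauliString β) s s' = ∏ j, (pauli (α j) * pauli (β j)) (s j) (s' j) := by
  simp only [Matrix.mul_apply, pauliString, Finset.prod_univ_sum, Fintype.piFinset_univ,
    Finset.prod_mul_distrib]

lemma pauliString_mul (α β : Fin N → Fin 4) :
    pauliString α * pauliString β =
      (∏ j, pauliMulPhase (α j) (β j)) • pauliString (fun j => α j ^^^ β j) := by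
  ext s s'
  simp only [pauliString_mul_apply, pauli_mul_pauli, Matrix.smul_apply, smul_eq_mul,
    Finset.prod_mul_distrib, pauliString]

lemma pauliString_mul_self (α : Fin N → Fin 4) : pauliString α * pauliString α = 1 := by
  ext s s'
  simp [pauliString_mul_apply, pauli_mul_self, Matrix.one_apply, Fintype.prod_boole, funext_iff]

lemma trace_pauliString_mul (α β : Fin N → Fin 4) :
    trace (pauliString α * pauliString β) = if α = β then 2 ^ N else 0 := by
  simp only [Matrix.trace, Matrix.diag, pauliString_mul_apply]
  rw [← Fintype.piFinset_univ,
    Finset.sum_prod_piFinset _ fun j x => (pauli (α j) * pauli (β j)) x x]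
  simp only [show ∀ a b : Fin 4, ∑ x, (pauli a * pauli b) x x = if a = b then 2 else 0 from
    trace_pauli_mul_pauli]
  simp [Fintype.prod_ite_zero, funext_iff]

lemma eq_of_smul_pauliString_eq {α β : Fin N → Fin 4} {c : ℂ}
    (h : c • pauliString α = pauliString β) : α = β := by
  by_contra hne
  have := congrArg (fun M => trace (M * pauliString β)) h
  simp only [smul_mul, trace_smul, trace_pauliString_mul, if_neg hne,
    smul_zero] at this
  exact pow_ne_zero N (two_ne_zero' ℂ) this.symm

lemma pauliString_injective : Function.Injective (pauliString (N := N)) :=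
  fun _ _ h => eq_of_smul_pauliString_eq (c := 1) (by rw [one_smul, h])

def stabLabels (ψ : (Fin N → Fin 2) → ℂ) : Set (Fin N → Fin 4) :=
  {α | pauliString α *ᵥ ψ = ψ ∨ pauliString α *ᵥ ψ = -ψ}

lemma stabGroup_eq_image (ψ : (Fin N → Fin 2) → ℂ) :
    stabGroup ψ = pauliString '' stabLabels ψ := by
  ext σ
  constructor
  · rintro ⟨⟨α, rfl⟩, h⟩
    exact ⟨α, h, rfl⟩
  · rintro ⟨α, h, rfl⟩
    exact ⟨⟨α, rfl⟩, h⟩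

/-- Pauli strings square to `1`, so `±1` are their only eigenvalues. -/
lemma mem_stabLabels_iff {α : Fin N → Fin 4} {ψ : (Fin N → Fin 2) → ℂ} :
    α ∈ stabLabels ψ ↔ ∃ c : ℂ, pauliString α *ᵥ ψ = c • ψ := by
  refine ⟨fun h => h.elim (fun h => ⟨1, by simpa using h⟩) (fun h => ⟨-1, by simpa using h⟩), ?_⟩
  rintro ⟨c, hc⟩
  by_cases hψ : ψ = 0
  · left
    simp [hψ]
  have hsq : (c * c) • ψ = (1 : ℂ) • ψ := by
    rw [← smul_smul, ← hc, ← mulVec_smul, ← hc, mulVec_mulVec, pauliString_mul_self, one_mulVec,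
      one_smul]
  rcases mul_self_eq_one_iff.mp (smul_left_injective ℂ hψ hsq) with rfl | rfl
  · left
    simpa using hc
  · right
    simpa using hc

lemma xor_mem_stabLabels {ψ : (Fin N → Fin 2) → ℂ} {α β : Fin N → Fin 4}
    (hα : α ∈ stabLabels ψ) (hβ : β ∈ stabLabels ψ) :
    (fun j => α j ^^^ β j) ∈ stabLabels ψ := by
  obtain ⟨a, ha⟩ := mem_stabLabels_iff.mp hα
  obtain ⟨b, hb⟩ := mem_stabLabels_iff.mp hβ
  set d := ∏ j, pauliMulPhase (α j) (β j)
  have hd : d ≠ 0 := Finset.prod_ne_zero_iff.mpr fun j _ => pauliMulPhase_ne_zero _ _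
  have hprod : d • (pauliString (fun j => α j ^^^ β j) *ᵥ ψ) = (a * b) • ψ := by
    rw [← smul_mulVec, ← pauliString_mul, ← mulVec_mulVec, hb, mulVec_smul, ha, smul_smul,
      mul_comm]
  refine mem_stabLabels_iff.mpr ⟨d⁻¹ * (a * b), ?_⟩
  rw [mul_smul, ← hprod, smul_smul, inv_mul_cancel₀ hd, one_smul]

lemma IsClifford.exists_injective_relabel {U : Matrix (Fin N → Fin 2) (Fin N → Fin 2) ℂ}
    (hU : IsClifford U) :
    ∃ (β : (Fin N → Fin 4) → Fin N → Fin 4) (c : (Fin N → Fin 4) → ℂ), Function.Injective β ∧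
      ∀ α, pauliString (β α) * U = c α • (U * pauliString α) := by
  obtain ⟨hUu, hUc⟩ := hU
  choose β c hc hconj using hUc
  have hc0 : ∀ α, c α ≠ 0 := fun α => by
    rcases hc α with h | h | h | h <;> simp [h]
  have hUU : Uᴴ * U = 1 := mem_unitaryGroup_iff'.mp hUu
  have hUU' : U * Uᴴ = 1 := mem_unitaryGroup_iff.mp hUu
  have hpull : ∀ α, Uᴴ * pauliString (β α) * U = (c α)⁻¹ • pauliString α := fun α => by
    have h : Uᴴ * (U * pauliString α * Uᴴ) * U = pauliString α := by
      rw [← mul_assoc, ← mul_assoc, hUU, one_mul, mul_assoc, hUU, mul_one]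
    rw [hconj, Matrix.mul_smul, Matrix.smul_mul] at h
    rwa [eq_inv_smul_iff₀ (hc0 α)]
  refine ⟨β, fun α => (c α)⁻¹, fun α₁ α₂ h => ?_, fun α => ?_⟩
  · have h' : (c α₁)⁻¹ • pauliString α₁ = (c α₂)⁻¹ • pauliString α₂ := by
      rw [← hpull, ← hpull, h]
    refine eq_of_smul_pauliString_eq (c := c α₂ * (c α₁)⁻¹) ?_
    rw [mul_smul, h', smul_smul, mul_inv_cancel₀ (hc0 α₂), one_smul]
  · rw [← Matrix.mul_smul, ← hpull, ← mul_assoc, ← mul_assoc, hUU', one_mul]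

lemma ncard_stabLabels_le_of_isClifford {U : Matrix (Fin N → Fin 2) (Fin N → Fin 2) ℂ}
    (hU : IsClifford U) (ψ : (Fin N → Fin 2) → ℂ) :
    (stabLabels ψ).ncard ≤ (stabLabels (U *ᵥ ψ)).ncard := by
  obtain ⟨β, c, hβ, hrelabel⟩ := hU.exists_injective_relabel
  rw [← Set.ncard_image_of_injective _ hβ]
  refine Set.ncard_le_ncard ?_ (Set.toFinite _)
  rintro _ ⟨α, hα, rfl⟩
  obtain ⟨a, ha⟩ := mem_stabLabels_iff.mp hα
  refine mem_stabLabels_iff.mpr ⟨c α * a, ?_⟩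
  rw [mulVec_mulVec, hrelabel, smul_mulVec, ← mulVec_mulVec, ha, mulVec_smul, smul_smul]

lemma ncard_le_two_mul_ncard_sep {α : Type*} [Finite α] {S : Set α} {p : α → Prop}
    (f : α → α → α) (hf : ∀ a, Function.Injective (f a))
    (hfS : ∀ a ∈ S, ∀ b ∈ S, ¬p a → ¬p b → f a b ∈ S ∧ p (f a b)) :
    S.ncard ≤ 2 * {a ∈ S | p a}.ncard := by
  set S₀ := {a ∈ S | p a}
  have hsplit : (S \ S₀).ncard + S₀.ncard = S.ncard :=
    Set.ncard_sdiff_add_ncard_of_subset (Set.sep_subset _ _) (Set.toFinite _)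
  suffices (S \ S₀).ncard ≤ S₀.ncard by omega
  rcases (S \ S₀).eq_empty_or_nonempty with h | ⟨a, haS, ha⟩
  · simp [h]
  rw [← Set.ncard_image_of_injective _ (hf a)]
  refine Set.ncard_le_ncard ?_ (Set.toFinite _)
  rintro _ ⟨b, ⟨hbS, hb⟩, rfl⟩
  exact hfS a haS b hbS (fun h => ha ⟨haS, h⟩) (fun h => hb ⟨hbS, h⟩)

lemma pauliString_mul_Tgate {α : Fin N → Fin 4} {i : Fin N} (hi : α i = 0 ∨ α i = 3) :
    pauliString α * Tgate i = Tgate i * pauliString α := by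
  ext s s'
  rw [Tgate, mul_diagonal, diagonal_mul]
  by_cases h : s i = s' i
  · rw [h, mul_comm]
  · rw [show pauliString α s s' = 0 from
      Finset.prod_eq_zero (Finset.mem_univ i) (pauli_apply_eq_zero_of_ne hi h), mul_zero, zero_mul]

lemma ncard_stabLabels_le_two_mul_Tgate (ψ : (Fin N → Fin 2) → ℂ) (i : Fin N) :
    (stabLabels ψ).ncard ≤ 2 * (stabLabels (Tgate i *ᵥ ψ)).ncard := by
  have hxor : ∀ x y : Fin 4, ¬(x = 0 ∨ x = 3) → ¬(y = 0 ∨ y = 3) → x ^^^ y = 0 ∨ x ^^^ y = 3 := by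
    decide
  have hinj : ∀ α : Fin N → Fin 4, Function.Injective fun (β : Fin N → Fin 4) j => α j ^^^ β j :=
    fun α β β' h => funext fun j => xor_left_injective_fin_four (α j) (congrFun h j)
  have hhalf := ncard_le_two_mul_ncard_sep (S := stabLabels ψ)
    (p := fun α => α i = 0 ∨ α i = 3) _ hinj
    fun α hα β hβ hαi hβi => ⟨xor_mem_stabLabels hα hβ, hxor _ _ hαi hβi⟩
  refine hhalf.trans (Nat.mul_le_mul_left 2 (Set.ncard_le_ncard ?_ (Set.toFinite _)))
  rintro α ⟨hα, hi⟩
  obtain ⟨c, hc⟩ := mem_stabLabels_iff.mp hα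
  refine mem_stabLabels_iff.mpr ⟨c, ?_⟩
  rw [mulVec_mulVec, pauliString_mul_Tgate hi, ← mulVec_mulVec, hc, mulVec_smul]

lemma zeroState_eq_single (N : ℕ) : zeroState N = Pi.single (fun _ => 0) 1 := by
  funext s
  simp [zeroState, Pi.single_apply]

lemma mem_stabLabels_zeroState {α : Fin N → Fin 4} (hα : ∀ j, α j = 0 ∨ α j = 3) :
    α ∈ stabLabels (zeroState N) := by
  left
  funext s
  simp [zeroState_eq_single, pauliString, pauli_apply_zero_right (hα _),
    Fintype.prod_boole, Pi.single_apply, funext_iff]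

lemma two_pow_le_ncard_stabLabels_zeroState : 2 ^ N ≤ (stabLabels (zeroState N)).ncard := by
  let Z : Finset (Fin N → Fin 4) := Fintype.piFinset fun _ => {0, 3}
  calc 2 ^ N = (Z : Set (Fin N → Fin 4)).ncard := by rw [Set.ncard_coe_finset]; simp [Z]
    _ ≤ _ := Set.ncard_le_ncard (fun α hα => mem_stabLabels_zeroState (by simpa [Z] using hα))
      (Set.toFinite _)

lemma star_zeroState_dotProduct : star (zeroState N) ⬝ᵥ zeroState N = 1 := by
  simp [zeroState_eq_single]

lemma Tgate_mem_unitaryGroup (i : Fin N) : Tgate i ∈ unitaryGroup (Fin N → Fin 2) ℂ := by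
  rw [mem_unitaryGroup_iff', Tgate, star_eq_conjTranspose, diagonal_conjTranspose,
    diagonal_mul_diagonal, ← diagonal_one, diagonal_eq_diagonal_iff]
  intro s
  by_cases h : s i = 1 <;> simp [h, Complex.conj_mul', Complex.norm_exp]

lemma star_mulVec_dotProduct_mulVec {n : Type*} [Fintype n] [DecidableEq n] {U : Matrix n n ℂ}
    (hU : U ∈ unitaryGroup n ℂ) (v : n → ℂ) :
    star (U *ᵥ v) ⬝ᵥ (U *ᵥ v) = star v ⬝ᵥ v := by
  rw [star_mulVec, ← dotProduct_mulVec, mulVec_mulVec, ← star_eq_conjTranspose,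
    mem_unitaryGroup_iff'.mp hU, one_mulVec]

lemma trace_vecMulVec_mul {n R : Type*} [Fintype n] [CommSemiring R] (u v : n → R)
    (M : Matrix n n R) : trace (vecMulVec u v * M) = v ⬝ᵥ (M *ᵥ u) := by
  rw [vecMulVec_mul, trace_vecMulVec, dotProduct_comm, dotProduct_mulVec]

lemma finsum_stabGroup_trace_sq {ψ : (Fin N → Fin 2) → ℂ} (hψ : star ψ ⬝ᵥ ψ = 1) :
    ∑ᶠ σ ∈ stabGroup ψ, trace (vecMulVec ψ (star ψ) * σ) ^ 2 / 2 ^ N =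
      ((stabLabels ψ).ncard : ℂ) / 2 ^ N := by
  have hterm : ∀ α ∈ stabLabels ψ,
      trace (vecMulVec ψ (star ψ) * pauliString α) ^ 2 / 2 ^ N = 1 * (1 / 2 ^ N) := by
    rintro α (h | h) <;> simp [trace_vecMulVec_mul, h, hψ]
  have hcount : ∑ᶠ α ∈ stabLabels ψ, (1 : ℂ) = (stabLabels ψ).ncard := by
    rw [← finsum_one, Nat.cast_finsum_mem (Set.toFinite _), Nat.cast_one]
  rw [stabGroup_eq_image, finsum_mem_image pauliString_injective.injOn, finsum_mem_congr rfl hterm,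
    ← finsum_mem_mul, hcount, mul_one_div]

section TDoped

variable {t : ℕ} {C : ℕ → Matrix (Fin N → Fin 2) (Fin N → Fin 2) ℂ} {idx : ℕ → Fin N}
  {φ : ℕ → (Fin N → Fin 2) → ℂ}

lemma star_dotProduct_self_tDoped (hC : ∀ j ≤ t, IsClifford (C j))
    (hφ0 : φ 0 = C 0 *ᵥ zeroState N)
    (hφ : ∀ j < t, φ (j + 1) = C (j + 1) *ᵥ (Tgate (idx (j + 1)) *ᵥ φ j)) :
    ∀ j ≤ t, star (φ j) ⬝ᵥ φ j = 1
  | 0, _ => by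
    rw [hφ0, star_mulVec_dotProduct_mulVec (hC 0 (Nat.zero_le t)).1, star_zeroState_dotProduct]
  | j + 1, hj => by
    rw [hφ j hj, star_mulVec_dotProduct_mulVec (hC _ hj).1,
      star_mulVec_dotProduct_mulVec (Tgate_mem_unitaryGroup _),
      star_dotProduct_self_tDoped hC hφ0 hφ j (Nat.le_of_succ_le hj)]

lemma two_pow_le_two_pow_mul_ncard_stabLabels_tDoped (hC : ∀ j ≤ t, IsClifford (C j))
    (hφ0 : φ 0 = C 0 *ᵥ zeroState N)
    (hφ : ∀ j < t, φ (j + 1) = C (j + 1) *ᵥ (Tgate (idx (j + 1)) *ᵥ φ j)) :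
    ∀ j ≤ t, 2 ^ N ≤ 2 ^ j * (stabLabels (φ j)).ncard
  | 0, _ => by
    rw [hφ0, pow_zero, one_mul]
    exact two_pow_le_ncard_stabLabels_zeroState.trans
      (ncard_stabLabels_le_of_isClifford (hC 0 (Nat.zero_le t)) _)
  | j + 1, hj => by
    rw [hφ j hj, pow_succ, mul_assoc]
    calc 2 ^ N ≤ 2 ^ j * (stabLabels (φ j)).ncard :=
          two_pow_le_two_pow_mul_ncard_stabLabels_tDoped hC hφ0 hφ j (Nat.le_of_succ_le hj)
      _ ≤ 2 ^ j * (2 * (stabLabels (Tgate (idx (j + 1)) *ᵥ φ j)).ncard) :=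
          Nat.mul_le_mul_left _ (ncard_stabLabels_le_two_mul_Tgate _ _)
      _ ≤ 2 ^ j * (2 * (stabLabels (C (j + 1) *ᵥ (Tgate (idx (j + 1)) *ᵥ φ j))).ncard) :=
          Nat.mul_le_mul_left _ <| Nat.mul_le_mul_left _ <|
            ncard_stabLabels_le_of_isClifford (hC _ hj) _

end TDoped

/-- For a t-doped stabilizer state
`ψ = C_t T_{i_t} C_{t-1} ⋯ C_1 T_{i_1} C_0 |0⟩^{⊗N}` with `ρ = |ψ⟩⟨ψ|`, the probability
that a Pauli string sampled from `Π_ρ(σ) = Tr[ρσ]² / 2^N` lies in the stabilizer group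
is at least `2^{-t}`: `∑_{σ ∈ G_S(ψ)} Π_ρ(σ) ≥ 1 / 2^t`. -/
theorem stabGroup_sampling_prob_tDoped {N t : ℕ}
    (C : ℕ → Matrix (Fin N → Fin 2) (Fin N → Fin 2) ℂ)
    (idx : ℕ → Fin N)
    (hC : ∀ j ≤ t, IsClifford (C j))
    (φ : ℕ → (Fin N → Fin 2) → ℂ)
    (hφ0 : φ 0 = C 0 *ᵥ zeroState N)
    (hφ : ∀ j < t, φ (j + 1) = C (j + 1) *ᵥ (Tgate (idx (j + 1)) *ᵥ φ j))
    (ψ : (Fin N → Fin 2) → ℂ) (hψ : ψ = φ t) :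
    (1 / 2 ^ t : ℂ) ≤
      ∑ᶠ σ ∈ stabGroup ψ,
        Matrix.trace (Matrix.vecMulVec ψ (star ψ) * σ) ^ 2 / 2 ^ N := by
  subst hψ
  rw [finsum_stabGroup_trace_sq (star_dotProduct_self_tDoped hC hφ0 hφ t le_rfl)]
  have hcard := two_pow_le_two_pow_mul_ncard_stabLabels_tDoped hC hφ0 hφ t le_rfl
  have hreal : (1 / 2 ^ t : ℝ) ≤ (stabLabels (φ t)).ncard / 2 ^ N := by
    rw [div_le_div_iff₀ (by positivity) (by positivity), one_mul, mul_comm]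
    exact_mod_cast hcard
  simpa using Complex.real_le_real.mpr hreal
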